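/- Let n ≥ 1, G : ℝⁿ → (n×n real symmetric matrices) smooth, V : ℝⁿ → ℝ smooth, and let ξ : ℝⁿ → ℝⁿ be a smooth vector field and τ : ℝⁿ → ℝ a smooth function with £_ξ G = τ·G and £_ξ V = −τ·V. Let χ : ℝ → ℝ be any smooth function. Then the generator X with components χ(t)∂_t + Σ_α ξ^α(q)∂_{q^α} + ω∂_N, where ω(t,q,N) = N·(τ(q) − dχ/dt), satisfies the variational-symmetry criterion pr¹X(L) + L·D(χ) = 0 identically in (t,q,N,v,w) with N > 0; in particular it is a variational symmetry of the action with constant gauge function f. -/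
import Mathlib


open scoped BigOperators

/-- Partial derivative `∂f/∂q^α` of a scalar function on `ℝⁿ`. -/
noncomputable def pd {n : ℕ} (f : (Fin n → ℝ) → ℝ) (α : Fin n) (q : Fin n → ℝ) : ℝ :=
  fderiv ℝ f q (Pi.single α 1)

/-- Lie derivative `(£_ξ G)_{μν}`. -/
noncomputable def lieG {n : ℕ} (ξ : (Fin n → ℝ) → Fin n → ℝ)
    (G : (Fin n → ℝ) → Fin n → Fin n → ℝ) (q : Fin n → ℝ) (μ ν : Fin n) : ℝ :=
  ∑ α : Fin n, (ξ q α * pd (fun p => G p μ ν) α q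
      + pd (fun p => ξ p α) μ q * G q α ν
      + pd (fun p => ξ p α) ν q * G q μ α)

/-- Lie derivative `£_ξ V`. -/
noncomputable def lieV {n : ℕ} (ξ : (Fin n → ℝ) → Fin n → ℝ)
    (V : (Fin n → ℝ) → ℝ) (q : Fin n → ℝ) : ℝ :=
  ∑ α : Fin n, ξ q α * pd V α q

private lemma sum3_rot {n : ℕ} (f : Fin n → Fin n → Fin n → ℝ) :
    (∑ a : Fin n, ∑ b : Fin n, ∑ c : Fin n, f a b c)
      = ∑ c : Fin n, ∑ a : Fin n, ∑ b : Fin n, f a b c := by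
  have h : ∀ a : Fin n, (∑ b : Fin n, ∑ c : Fin n, f a b c)
      = ∑ c : Fin n, ∑ b : Fin n, f a b c := fun a => Finset.sum_comm
  simp_rw [h]
  exact Finset.sum_comm

private lemma comb2 {n : ℕ} (f g : Fin n → ℝ) (a b : ℝ) :
    (∑ i : Fin n, (a * f i + b * g i)) = a * (∑ i : Fin n, f i) + b * (∑ i : Fin n, g i) := by
  rw [Finset.mul_sum, Finset.mul_sum, ← Finset.sum_add_distrib]

private lemma comb3 {n : ℕ} (f g h : Fin n → ℝ) (a b c : ℝ) :
    (∑ i : Fin n, (a * f i + b * g i + c * h i))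
      = a * (∑ i : Fin n, f i) + b * (∑ i : Fin n, g i) + c * (∑ i : Fin n, h i) := by
  rw [Finset.mul_sum, Finset.mul_sum, Finset.mul_sum, ← Finset.sum_add_distrib,
    ← Finset.sum_add_distrib]

/-- if `£_ξ G = τ·G` and `£_ξ V = −τ·V`, then for any smooth `χ(t)` the generator
`X = χ∂_t + Σ ξ^α ∂_{q^α} + ω ∂_N` with `ω = N(τ − dχ/dt)` satisfies the variational-symmetry
criterion `pr¹X(L) + L·D(χ) = 0` identically (constant gauge function). -/
theorem variational_symmetry_of_conformal_killing (n : ℕ) (hn : 1 ≤ n)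
    (G : (Fin n → ℝ) → Fin n → Fin n → ℝ) (V : (Fin n → ℝ) → ℝ)
    (hGsmooth : ∀ μ ν, ContDiff ℝ (⊤ : ℕ∞) fun q => G q μ ν)
    (hGsymm : ∀ q μ ν, G q μ ν = G q ν μ)
    (hVsmooth : ContDiff ℝ (⊤ : ℕ∞) V)
    (ξ : (Fin n → ℝ) → Fin n → ℝ) (τ : (Fin n → ℝ) → ℝ)
    (hξsmooth : ContDiff ℝ (⊤ : ℕ∞) ξ)
    (hτsmooth : ContDiff ℝ (⊤ : ℕ∞) τ)
    (hlieG : ∀ q μ ν, lieG ξ G q μ ν = τ q * G q μ ν)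
    (hlieV : ∀ q, lieV ξ V q = -(τ q) * V q)
    (χ : ℝ → ℝ) (hχ : ContDiff ℝ (⊤ : ℕ∞) χ) :
    -- the criterion `pr¹X(L) + L·D(χ) = 0` identically in `(t,q,N,v)` with `N > 0`,
    -- where `ω(t,q,N) = N (τ(q) − dχ/dt)` and `φ^α = D(ξ^α) − v^α D(χ)`
    ∀ (t : ℝ) (q : Fin n → ℝ) (N : ℝ), 0 < N → ∀ v : Fin n → ℝ,
      (∑ α : Fin n, ξ q α *
          ((1 / (2 * N)) * (∑ κ : Fin n, ∑ lam : Fin n,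
              pd (fun p => G p κ lam) α q * v κ * v lam)
            - N * pd V α q))
      + (N * (τ q - deriv χ t)) *
          (-(1 / (2 * N ^ 2)) * (∑ κ : Fin n, ∑ lam : Fin n, G q κ lam * v κ * v lam) - V q)
      + (∑ α : Fin n, ((∑ β : Fin n, v β * pd (fun p => ξ p α) β q) - v α * deriv χ t) *
          ((1 / (2 * N)) * ((∑ κ : Fin n, G q κ α * v κ)
            + (∑ lam : Fin n, G q α lam * v lam))))
      + ((1 / (2 * N)) * (∑ κ : Fin n, ∑ lam : Fin n, G q κ lam * v κ * v lam)
          - N * V q) * deriv χ t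
      = 0 := by
  intro t q N hN v
  have hNne : N ≠ 0 := ne_of_gt hN
  set A := deriv χ t with hA
  set Q := ∑ κ : Fin n, ∑ lam : Fin n, G q κ lam * v κ * v lam with hQ
  set SP := ∑ α : Fin n, ξ q α *
      (∑ κ : Fin n, ∑ lam : Fin n, pd (fun p => G p κ lam) α q * v κ * v lam) with hSP
  set SD := ∑ α : Fin n, (∑ β : Fin n, v β * pd (fun p => ξ p α) β q) *
      ((∑ κ : Fin n, G q κ α * v κ) + (∑ lam : Fin n, G q α lam * v lam)) with hSD
  set SV := ∑ α : Fin n, ξ q α * pd V α q with hSV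
  -- key identity from hlieG summed against v
  have h1 : (∑ κ : Fin n, ∑ lam : Fin n,
      (∑ α : Fin n, (ξ q α * pd (fun p => G p κ lam) α q
        + pd (fun p => ξ p α) κ q * G q α lam
        + pd (fun p => ξ p α) lam q * G q κ α)) * v κ * v lam)
      = τ q * Q := by
    rw [hQ, Finset.mul_sum]
    refine Finset.sum_congr rfl fun κ _ => ?_
    rw [Finset.mul_sum]
    refine Finset.sum_congr rfl fun lam _ => ?_
    have h := hlieG q κ lam
    rw [lieG] at h
    rw [h]; ring
  have e_a : (∑ κ : Fin n, ∑ lam : Fin n, ∑ α : Fin n,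
      ξ q α * pd (fun p => G p κ lam) α q * v κ * v lam) = SP := by
    rw [sum3_rot, hSP]
    refine Finset.sum_congr rfl fun α _ => ?_
    rw [Finset.mul_sum]
    refine Finset.sum_congr rfl fun κ _ => ?_
    rw [Finset.mul_sum]
    exact Finset.sum_congr rfl fun lam _ => by ring
  have e_b : (∑ κ : Fin n, ∑ lam : Fin n, ∑ α : Fin n,
      pd (fun p => ξ p α) κ q * G q α lam * v κ * v lam)
      = ∑ α : Fin n, (∑ β : Fin n, v β * pd (fun p => ξ p α) β q) *
          (∑ lam : Fin n, G q α lam * v lam) := by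
    rw [sum3_rot]
    refine Finset.sum_congr rfl fun α _ => ?_
    rw [Finset.sum_mul]
    refine Finset.sum_congr rfl fun κ _ => ?_
    rw [Finset.mul_sum]
    exact Finset.sum_congr rfl fun lam _ => by ring
  have e_c : (∑ κ : Fin n, ∑ lam : Fin n, ∑ α : Fin n,
      pd (fun p => ξ p α) lam q * G q κ α * v κ * v lam)
      = ∑ α : Fin n, (∑ β : Fin n, v β * pd (fun p => ξ p α) β q) *
          (∑ κ : Fin n, G q κ α * v κ) := by
    have swap : (∑ κ : Fin n, ∑ lam : Fin n, ∑ α : Fin n,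
        pd (fun p => ξ p α) lam q * G q κ α * v κ * v lam)
        = ∑ lam : Fin n, ∑ κ : Fin n, ∑ α : Fin n,
        pd (fun p => ξ p α) lam q * G q κ α * v κ * v lam := Finset.sum_comm
    rw [swap, sum3_rot]
    refine Finset.sum_congr rfl fun α _ => ?_
    rw [Finset.sum_mul]
    refine Finset.sum_congr rfl fun lam _ => ?_
    rw [Finset.mul_sum]
    exact Finset.sum_congr rfl fun κ _ => by ring
  have hKey : SP + SD = τ q * Q := by
    rw [← h1]
    simp only [Finset.sum_mul, add_mul, Finset.sum_add_distrib]
    rw [e_a, e_b, e_c, hSD]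
    simp only [mul_add, Finset.sum_add_distrib]
    ring
  have h2 : SV = -(τ q) * V q := hlieV q
  have hR1 : (∑ α : Fin n, v α * (∑ κ : Fin n, G q κ α * v κ)) = Q :=
    calc (∑ α : Fin n, v α * (∑ κ : Fin n, G q κ α * v κ))
        = ∑ α : Fin n, ∑ κ : Fin n, G q κ α * v κ * v α :=
          Finset.sum_congr rfl fun α _ => by
            rw [Finset.mul_sum]; exact Finset.sum_congr rfl fun κ _ => by ring
      _ = ∑ κ : Fin n, ∑ α : Fin n, G q κ α * v κ * v α := Finset.sum_comm
      _ = Q := hQ.symm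
  have hR2 : (∑ α : Fin n, v α * (∑ lam : Fin n, G q α lam * v lam)) = Q := by
    rw [hQ]
    refine Finset.sum_congr rfl fun α _ => ?_
    rw [Finset.mul_sum]
    exact Finset.sum_congr rfl fun lam _ => by ring
  -- rewrite the first structured sum of the goal
  have eT1 : (∑ α : Fin n, ξ q α *
      ((1 / (2 * N)) * (∑ κ : Fin n, ∑ lam : Fin n,
          pd (fun p => G p κ lam) α q * v κ * v lam)
        - N * pd V α q))
      = (1 / (2 * N)) * SP + (-N) * SV :=
    calc (∑ α : Fin n, ξ q α *
        ((1 / (2 * N)) * (∑ κ : Fin n, ∑ lam : Fin n,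
            pd (fun p => G p κ lam) α q * v κ * v lam)
          - N * pd V α q))
        = ∑ α : Fin n, ((1 / (2 * N)) * (ξ q α * (∑ κ : Fin n, ∑ lam : Fin n,
              pd (fun p => G p κ lam) α q * v κ * v lam))
            + (-N) * (ξ q α * pd V α q)) :=
          Finset.sum_congr rfl fun α _ => by ring
      _ = (1 / (2 * N)) * SP + (-N) * SV := by
          rw [comb2, ← hSP, ← hSV]
  have eT3 : (∑ α : Fin n, ((∑ β : Fin n, v β * pd (fun p => ξ p α) β q) - v α * A) *
      ((1 / (2 * N)) * ((∑ κ : Fin n, G q κ α * v κ)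
        + (∑ lam : Fin n, G q α lam * v lam))))
      = (1 / (2 * N)) * SD + (-(A * (1 / (2 * N)))) *
          (∑ α : Fin n, v α * (∑ κ : Fin n, G q κ α * v κ))
        + (-(A * (1 / (2 * N)))) *
          (∑ α : Fin n, v α * (∑ lam : Fin n, G q α lam * v lam)) :=
    calc (∑ α : Fin n, ((∑ β : Fin n, v β * pd (fun p => ξ p α) β q) - v α * A) *
        ((1 / (2 * N)) * ((∑ κ : Fin n, G q κ α * v κ)
          + (∑ lam : Fin n, G q α lam * v lam))))
        = ∑ α : Fin n, ((1 / (2 * N)) * ((∑ β : Fin n, v β * pd (fun p => ξ p α) β q) *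
              ((∑ κ : Fin n, G q κ α * v κ) + (∑ lam : Fin n, G q α lam * v lam)))
            + (-(A * (1 / (2 * N)))) * (v α * (∑ κ : Fin n, G q κ α * v κ))
            + (-(A * (1 / (2 * N)))) * (v α * (∑ lam : Fin n, G q α lam * v lam))) :=
          Finset.sum_congr rfl fun α _ => by ring
      _ = _ := by rw [comb3, ← hSD]
  rw [eT1, eT3, hR1, hR2, h2]
  have hSPval : SP = τ q * Q - SD := by linarith [hKey]
  rw [hSPval]
  field_simp
  ring
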